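/- For n ≥ 3 odd, there exists a cyclic Gray code for the permutations of the multiset {1, 2, 3, 3, …, 3} (one 1, one 2, and n-2 copies of 3): a cyclic listing of all n(n-1) such arrangements in which consecutive arrangements (cyclically) differ by swapping two adjacent entries. -/

import Mathlib

/-- A word of length `n` that is a permutation of the multiset `{1,2,3,3,…,3}`:
exactly one entry equals 1, exactly one entry equals 2, and all remaining entries
equal 3. -/
def IsMultisetWord (n : ℕ) (w : Fin n → ℕ) : Prop :=
  (∃! i : Fin n, w i = 1) ∧ (∃! i : Fin n, w i = 2) ∧ ∀ i : Fin n, w i = 1 ∨ w i = 2 ∨ w i = 3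

/-- Two words differ by an adjacent transposition: two consecutive (distinct) entries are
exchanged and all other entries are unchanged. -/
def AdjSwap (n : ℕ) (w w' : Fin n → ℕ) : Prop :=
  ∃ j : ℕ, ∃ h : j + 1 < n,
    w' ⟨j, by omega⟩ = w ⟨j + 1, h⟩ ∧
    w' ⟨j + 1, h⟩ = w ⟨j, by omega⟩ ∧
    (∀ k : Fin n, k.val ≠ j → k.val ≠ j + 1 → w' k = w k) ∧
    w ⟨j, by omega⟩ ≠ w ⟨j + 1, h⟩

namespace GrayAux

def wrd (n x y : ℕ) : Fin n → ℕ := fun i => if i.val = x then 1 else if i.val = y then 2 else 3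

lemma wrd_isWord {n x y : ℕ} (hx : x < n) (hy : y < n) (hxy : x ≠ y) :
    IsMultisetWord n (wrd n x y) := by
  refine ⟨⟨⟨x, hx⟩, ?_, ?_⟩, ⟨⟨y, hy⟩, ?_, ?_⟩, ?_⟩
  · simp [wrd]
  · intro i hi
    simp only [wrd] at hi
    split_ifs at hi with h1 h2 <;> first | (exact Fin.ext h1) | omega
  · simp only [wrd]
    split_ifs with h1 <;> omega
  · intro i hi
    simp only [wrd] at hi
    split_ifs at hi with h1 h2 <;> first | (exact Fin.ext h2) | omega
  · intro i
    simp only [wrd]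
    split_ifs <;> omega

lemma wrd_inj {n x y x' y' : ℕ} (hx : x < n) (hy : y < n) (hxy : x ≠ y)
    (hx' : x' < n) (hy' : y' < n) (hxy' : x' ≠ y')
    (h : wrd n x y = wrd n x' y') : x = x' ∧ y = y' := by
  have h1 := congrFun h ⟨x, hx⟩
  have h2 := congrFun h ⟨y, hy⟩
  simp only [wrd] at h1 h2
  split_ifs at h1 h2 <;> omega

lemma eq_wrd {n : ℕ} {w : Fin n → ℕ} (hw : IsMultisetWord n w) :
    ∃ x y : ℕ, x < n ∧ y < n ∧ x ≠ y ∧ w = wrd n x y := by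
  obtain ⟨⟨i1, hi1, hu1⟩, ⟨i2, hi2, hu2⟩, h3⟩ := hw
  refine ⟨i1.val, i2.val, i1.isLt, i2.isLt, ?_, ?_⟩
  · intro h
    have : i1 = i2 := Fin.ext h
    rw [this, hi2] at hi1; omega
  · funext k
    simp only [wrd]
    split_ifs with hk1 hk2
    · have : k = i1 := Fin.ext hk1; rw [this, hi1]
    · have : k = i2 := Fin.ext hk2; rw [this, hi2]
    · rcases h3 k with h | h | h
      · exact absurd (congrArg Fin.val (hu1 k h)) hk1
      · exact absurd (congrArg Fin.val (hu2 k h)) hk2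
      · exact h

def Step (n : ℕ) (a b : ℕ × ℕ) : Prop := AdjSwap n (wrd n a.1 a.2) (wrd n b.1 b.2)

lemma Step.symm {n : ℕ} {a b : ℕ × ℕ} (h : Step n a b) : Step n b a := by
  obtain ⟨j, hj, h1, h2, h3, h4⟩ := h
  refine ⟨j, hj, h2.symm, h1.symm, fun k hk1 hk2 => (h3 k hk1 hk2).symm, ?_⟩
  rw [h1, h2]
  exact h4.symm

lemma step_right1 {n x y : ℕ} (h : x + 1 < n) (hy : y < n) (h1 : y ≠ x) (h2 : y ≠ x + 1) :
    Step n (x, y) (x + 1, y) := by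
  refine ⟨x, h, ?_, ?_, ?_, ?_⟩
  · simp only [wrd]; split_ifs <;> omega
  · simp only [wrd]; split_ifs <;> omega
  · intro k hk1 hk2; simp only [wrd]; split_ifs <;> omega
  · simp only [wrd]; split_ifs <;> omega

lemma step_right2 {n x y : ℕ} (h : y + 1 < n) (hx : x < n) (h1 : x ≠ y) (h2 : x ≠ y + 1) :
    Step n (x, y) (x, y + 1) := by
  refine ⟨y, h, ?_, ?_, ?_, ?_⟩
  · simp only [wrd]; split_ifs <;> omega
  · simp only [wrd]; split_ifs <;> omega
  · intro k hk1 hk2; simp only [wrd]; split_ifs <;> omega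
  · simp only [wrd]; split_ifs <;> omega

lemma step_swap {n x : ℕ} (h : x + 1 < n) : Step n (x, x + 1) (x + 1, x) := by
  refine ⟨x, h, ?_, ?_, ?_, ?_⟩
  · simp only [wrd]; split_ifs <;> omega
  · simp only [wrd]; split_ifs <;> omega
  · intro k hk1 hk2; simp only [wrd]; split_ifs <;> omega
  · simp only [wrd]; split_ifs <;> omega

/-! ### The explicit cycle -/

def Pb (j : ℕ) : List (ℕ × ℕ) :=
  ((List.range (2*j+1)).map fun i => (2*j - i, 2*j+1)) ++
  ((List.range (2*j+2)).map fun i => (i, 2*j+2))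

def Tb (j : ℕ) : List (ℕ × ℕ) :=
  ((List.range (2*j+1)).map fun i => (2*j+2, 2*j+1 - i)) ++
  ((List.range (2*j+2)).map fun i => (2*j+3, i+1))

def Sb (n : ℕ) : List (ℕ × ℕ) :=
  ((List.range (n-1)).map fun i => (n-1, n-2-i)) ++
  ((List.range (n-2)).map fun i => (n-2-i, 0))

def cycAux : ℕ → List (ℕ × ℕ)
  | 0 => []
  | j+1 => cycAux j ++ (Pb j ++ Tb j)

def cyc (n : ℕ) : List (ℕ × ℕ) := cycAux ((n-3)/2) ++ (Pb ((n-3)/2) ++ Sb n)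

lemma head?_map_range {α : Type*} (f : ℕ → α) (k : ℕ) :
    ((List.range (k + 1)).map f).head? = some (f 0) := by
  rw [List.range_succ_eq_map]; simp

lemma getLast?_map_range {α : Type*} (f : ℕ → α) (k : ℕ) :
    ((List.range (k + 1)).map f).getLast? = some (f k) := by
  rw [List.range_succ]; simp

lemma chain'_map_range {α : Type*} (R : α → α → Prop) (f : ℕ → α) (k : ℕ)
    (h : ∀ m, m + 1 < k → R (f m) (f (m+1))) :
    List.Chain' R ((List.range k).map f) := by
  rw [List.Chain', List.isChain_map]
  cases k with
  | zero => simp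
  | succ k =>
    rw [List.isChain_range_succ]
    intro m hm
    exact h m (by omega)

lemma head?_Pb (j : ℕ) : (Pb j).head? = some (2*j, 2*j+1) := by
  rw [Pb, List.head?_append, head?_map_range]; simp

lemma getLast?_Pb (j : ℕ) : (Pb j).getLast? = some (2*j+1, 2*j+2) := by
  have : 2*j+2 = (2*j+1) + 1 := rfl
  rw [Pb, List.getLast?_append, this, getLast?_map_range]; simp

lemma head?_Tb (j : ℕ) : (Tb j).head? = some (2*j+2, 2*j+1) := by
  rw [Tb, List.head?_append, head?_map_range]; simp

lemma getLast?_Tb (j : ℕ) : (Tb j).getLast? = some (2*j+3, 2*j+2) := by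
  have : 2*j+2 = (2*j+1) + 1 := rfl
  rw [Tb, List.getLast?_append, this, getLast?_map_range]; simp

lemma head?_Sb {n : ℕ} (hn : 3 ≤ n) : (Sb n).head? = some (n-1, n-2) := by
  obtain ⟨m, rfl⟩ : ∃ m, n = m + 3 := ⟨n - 3, by omega⟩
  show ((List.range (m+2)).map _ ++ _).head? = _
  rw [List.head?_append, head?_map_range]; simp

lemma getLast?_Sb {n : ℕ} (hn : 3 ≤ n) : (Sb n).getLast? = some (1, 0) := by
  obtain ⟨m, rfl⟩ : ∃ m, n = m + 3 := ⟨n - 3, by omega⟩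
  show (_ ++ (List.range (m+1)).map (fun i => (m+3-2-i, 0))).getLast? = _
  rw [List.getLast?_append, getLast?_map_range]
  simp

lemma chain_Pb {n j : ℕ} (hj : 2*j+2 < n) : List.Chain' (Step n) (Pb j) := by
  rw [Pb, List.Chain', List.isChain_append]
  refine ⟨?_, ?_, ?_⟩
  · apply chain'_map_range
    intro m hm
    have h1 : 2*j - m = (2*j - (m+1)) + 1 := by omega
    rw [h1]
    exact Step.symm (step_right1 (by omega) (by omega) (by omega) (by omega))
  · apply chain'_map_range
    intro m hm
    exact step_right1 (by omega) (by omega) (by omega) (by omega)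
  · intro x hx y hy
    rw [getLast?_map_range] at hx
    rw [head?_map_range] at hy
    simp only [Option.mem_def, Option.some.injEq] at hx hy
    subst hx; subst hy
    have h1 : 2*j - 2*j = 0 := by omega
    rw [h1]
    have h2 : 2*j+2 = (2*j+1)+1 := rfl
    rw [h2]
    exact step_right2 (by omega) (by omega) (by omega) (by omega)

lemma chain_Tb {n j : ℕ} (hj : 2*j+3 < n) : List.Chain' (Step n) (Tb j) := by
  rw [Tb, List.Chain', List.isChain_append]
  refine ⟨?_, ?_, ?_⟩
  · apply chain'_map_range
    intro m hm
    have h1 : 2*j+1 - m = (2*j+1 - (m+1)) + 1 := by omega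
    rw [h1]
    exact Step.symm (step_right2 (by omega) (by omega) (by omega) (by omega))
  · apply chain'_map_range
    intro m hm
    exact step_right2 (by omega) (by omega) (by omega) (by omega)
  · intro x hx y hy
    rw [getLast?_map_range] at hx
    rw [head?_map_range] at hy
    simp only [Option.mem_def, Option.some.injEq] at hx hy
    subst hx; subst hy
    have h1 : 2*j+1 - (2*j) = 1 := by omega
    rw [h1]
    have h2 : 2*j+3 = (2*j+2)+1 := rfl
    rw [h2]
    exact step_right1 (by omega) (by omega) (by omega) (by omega)

lemma chain_Sb {n : ℕ} (hn : 3 ≤ n) : List.Chain' (Step n) (Sb n) := by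
  obtain ⟨m, rfl⟩ : ∃ m, n = m + 3 := ⟨n - 3, by omega⟩
  show List.Chain' _ ((List.range (m+2)).map (fun i => (m+3-1, m+3-2-i)) ++
    (List.range (m+1)).map (fun i => (m+3-2-i, 0)))
  rw [List.Chain', List.isChain_append]
  refine ⟨?_, ?_, ?_⟩
  · apply chain'_map_range
    intro i hi
    have h1 : m+3-2-i = (m+3-2-(i+1)) + 1 := by omega
    rw [h1]
    exact Step.symm (step_right2 (by omega) (by omega) (by omega) (by omega))
  · apply chain'_map_range
    intro i hi
    have h1 : m+3-2-i = (m+3-2-(i+1)) + 1 := by omega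
    rw [h1]
    exact Step.symm (step_right1 (by omega) (by omega) (by omega) (by omega))
  · intro x hx y hy
    rw [getLast?_map_range] at hx
    rw [head?_map_range] at hy
    simp only [Option.mem_def, Option.some.injEq] at hx hy
    subst hx; subst hy
    have h1 : m+3-2-(m+1) = 0 := by omega
    have h2 : m+3-1 = (m+3-2-0) + 1 := by omega
    rw [h1, h2]
    exact Step.symm (step_right1 (by omega) (by omega) (by omega) (by omega))

lemma head?_cycAux (j : ℕ) (hj : 0 < j) : (cycAux j).head? = some (0, 1) := by
  induction j with
  | zero => omega
  | succ j ih =>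
    rw [cycAux, List.head?_append]
    cases j with
    | zero =>
      show (List.head? [] ).or _ = _
      rw [List.head?_append, head?_Pb]
      simp
    | succ j =>
      rw [ih (by omega)]
      simp

lemma getLast?_cycAux (j : ℕ) (hj : 0 < j) : (cycAux j).getLast? = some (2*j+1, 2*j) := by
  obtain ⟨i, rfl⟩ : ∃ i, j = i + 1 := ⟨j - 1, by omega⟩
  rw [cycAux, List.getLast?_append, List.getLast?_append, getLast?_Tb]
  show some (2*i+3, 2*i+2) = _
  norm_num; constructor <;> omega

lemma chain_cycAux {n : ℕ} (j : ℕ) (hj : 2*j+1 < n) : List.Chain' (Step n) (cycAux j) := by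
  induction j with
  | zero => exact List.isChain_nil
  | succ j ih =>
    rw [cycAux, List.Chain', List.isChain_append]
    refine ⟨ih (by omega), ?_, ?_⟩
    · rw [List.isChain_append]
      refine ⟨chain_Pb (by omega), chain_Tb (by omega), ?_⟩
      intro x hx y hy
      rw [getLast?_Pb] at hx
      rw [head?_Tb] at hy
      simp only [Option.mem_def, Option.some.injEq] at hx hy
      subst hx; subst hy
      exact step_swap (by omega)
    · intro x hx y hy
      cases j with
      | zero => simp [cycAux] at hx
      | succ i =>
        rw [getLast?_cycAux _ (by omega)] at hx
        rw [List.head?_append, head?_Pb] at hy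
        simp only [Option.mem_def, Option.some.injEq] at hx hy
        subst hx
        have : y = (2*(i+1), 2*(i+1)+1) := by
          have := hy.symm; simpa using this
        subst this
        exact Step.symm (step_swap (by omega))

lemma chain_cyc {k : ℕ} : List.Chain' (Step (2*k+3)) (cyc (2*k+3)) := by
  have hJ : (2*k+3-3)/2 = k := by omega
  rw [cyc, hJ, List.Chain', List.isChain_append]
  refine ⟨chain_cycAux k (by omega), ?_, ?_⟩
  · rw [List.isChain_append]
    refine ⟨chain_Pb (by omega), chain_Sb (by omega), ?_⟩
    intro x hx y hy
    rw [getLast?_Pb] at hx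
    rw [head?_Sb (by omega)] at hy
    simp only [Option.mem_def, Option.some.injEq] at hx hy
    subst hx
    have : y = (2*k+2, 2*k+1) := by
      rw [← hy]; constructor <;> omega
    subst this
    have h1 : (2*k+1, 2*k+2) = (2*k+1, (2*k+1)+1) := rfl
    rw [h1]
    exact step_swap (by omega)
  · intro x hx y hy
    cases k with
    | zero => simp [cycAux] at hx
    | succ i =>
      rw [getLast?_cycAux _ (by omega)] at hx
      rw [List.head?_append, head?_Pb] at hy
      simp only [Option.mem_def, Option.some.injEq] at hx hy
      subst hx
      have : y = (2*(i+1), 2*(i+1)+1) := by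
        have := hy.symm; simpa using this
      subst this
      exact Step.symm (step_swap (by omega))

lemma head?_cyc {k : ℕ} : (cyc (2*k+3)).head? = some (0, 1) := by
  have hJ : (2*k+3-3)/2 = k := by omega
  rw [cyc, hJ, List.head?_append]
  cases k with
  | zero =>
    show (List.head? []).or _ = _
    rw [List.head?_append, head?_Pb]
    simp
  | succ i =>
    rw [head?_cycAux _ (by omega)]
    simp

lemma getLast?_cyc {k : ℕ} : (cyc (2*k+3)).getLast? = some (1, 0) := by
  have hJ : (2*k+3-3)/2 = k := by omega
  rw [cyc, hJ, List.getLast?_append, List.getLast?_append, getLast?_Sb (by omega)]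
  simp



lemma length_Pb (j : ℕ) : (Pb j).length = 4*j+3 := by
  simp [Pb]; omega

lemma length_Tb (j : ℕ) : (Tb j).length = 4*j+3 := by
  simp [Tb]; omega

lemma length_Sb {n : ℕ} (hn : 3 ≤ n) : (Sb n).length = 2*n - 3 := by
  simp [Sb]; omega

lemma length_cycAux (j : ℕ) : (cycAux j).length = 4*j*j + 2*j := by
  induction j with
  | zero => rfl
  | succ j ih =>
    simp only [cycAux, List.length_append, ih, length_Pb, length_Tb]
    ring

lemma length_cyc {k : ℕ} : (cyc (2*k+3)).length = (2*k+3) * (2*k+3-1) := by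
  have hJ : (2*k+3-3)/2 = k := by omega
  rw [cyc, hJ]
  simp only [List.length_append, length_cycAux, length_Pb, length_Sb (by omega : 3 ≤ 2*k+3)]
  have : 2*k+3-1 = 2*k+2 := by omega
  rw [this]
  have : 2*(2*k+3) - 3 = 4*k+3 := by omega
  rw [this]
  ring

lemma mem_Pb_left {j x : ℕ} (h : x ≤ 2*j) : (x, 2*j+1) ∈ Pb j := by
  rw [Pb]
  apply List.mem_append_left
  simp only [List.mem_map, List.mem_range]
  exact ⟨2*j - x, by omega, by rw [Prod.mk.injEq]; omega⟩

lemma mem_Pb_right {j x : ℕ} (h : x ≤ 2*j+1) : (x, 2*j+2) ∈ Pb j := by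
  rw [Pb]
  apply List.mem_append_right
  simp only [List.mem_map, List.mem_range]
  exact ⟨x, by omega, rfl⟩

lemma mem_Tb_left {j y : ℕ} (h1 : 1 ≤ y) (h2 : y ≤ 2*j+1) : (2*j+2, y) ∈ Tb j := by
  rw [Tb]
  apply List.mem_append_left
  simp only [List.mem_map, List.mem_range]
  exact ⟨2*j+1 - y, by omega, by rw [Prod.mk.injEq]; omega⟩

lemma mem_Tb_right {j y : ℕ} (h1 : 1 ≤ y) (h2 : y ≤ 2*j+2) : (2*j+3, y) ∈ Tb j := by
  rw [Tb]
  apply List.mem_append_right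
  simp only [List.mem_map, List.mem_range]
  exact ⟨y - 1, by omega, by rw [Prod.mk.injEq]; omega⟩

lemma mem_Sb_left {n y : ℕ} (hn : 3 ≤ n) (h : y ≤ n-2) : (n-1, y) ∈ Sb n := by
  rw [Sb]
  apply List.mem_append_left
  simp only [List.mem_map, List.mem_range]
  exact ⟨n-2 - y, by omega, by rw [Prod.mk.injEq]; omega⟩

lemma mem_Sb_right {n x : ℕ} (hn : 3 ≤ n) (h1 : 1 ≤ x) (h2 : x ≤ n-2) : (x, 0) ∈ Sb n := by
  rw [Sb]
  apply List.mem_append_right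
  simp only [List.mem_map, List.mem_range]
  exact ⟨n-2 - x, by omega, by rw [Prod.mk.injEq]; omega⟩

lemma mem_cycAux {p : ℕ × ℕ} {j m : ℕ} (hm : j < m) (h : p ∈ Pb j ∨ p ∈ Tb j) :
    p ∈ cycAux m := by
  induction m with
  | zero => omega
  | succ m ih =>
    rw [cycAux, List.mem_append]
    rcases Nat.lt_or_ge j m with h' | h'
    · exact Or.inl (ih h')
    · have : j = m := by omega
      subst this
      rw [List.mem_append]
      exact Or.inr h

lemma mem_cyc {k x y : ℕ} (hx : x < 2*k+3) (hy : y < 2*k+3) (hxy : x ≠ y) :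
    (x, y) ∈ cyc (2*k+3) := by
  have hJ : (2*k+3-3)/2 = k := by omega
  rw [cyc, hJ, List.mem_append]
  rcases Nat.lt_or_ge x y with h | h
  · -- x < y : P-blocks
    obtain ⟨j, hj1, hj2⟩ : ∃ j, (y = 2*j+1 ∨ y = 2*j+2) ∧ j ≤ k := ⟨(y-1)/2, by omega, by omega⟩
    have hmem : (x, y) ∈ Pb j := by
      rcases hj1 with rfl | rfl
      · exact mem_Pb_left (by omega)
      · exact mem_Pb_right (by omega)
    rcases Nat.lt_or_ge j k with h' | h'
    · exact Or.inl (mem_cycAux h' (Or.inl hmem))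
    · have : j = k := by omega
      subst this
      exact Or.inr (List.mem_append_left _ hmem)
  · -- y < x
    have hlt : y < x := by omega
    by_cases h1 : x = 2*k+2
    · subst h1
      refine Or.inr (List.mem_append_right _ ?_)
      have := mem_Sb_left (n := 2*k+3) (by omega) (y := y) (by omega)
      have e : 2*k+3-1 = 2*k+2 := by omega
      rwa [e] at this
    · by_cases h2 : y = 0
      · subst h2
        refine Or.inr (List.mem_append_right _ ?_)
        have := mem_Sb_right (n := 2*k+3) (by omega) (x := x) (by omega) (by omega)
        exact this
      · obtain ⟨j, hj1, hj2⟩ : ∃ j, (x = 2*j+2 ∨ x = 2*j+3) ∧ j < k :=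
          ⟨(x-2)/2, by omega, by omega⟩
        have hmem : (x, y) ∈ Tb j := by
          rcases hj1 with rfl | rfl
          · exact mem_Tb_left (by omega) (by omega)
          · exact mem_Tb_right (by omega) (by omega)
        exact Or.inl (mem_cycAux hj2 (Or.inr hmem))

lemma valid_Pb {n j : ℕ} (hj : 2*j+2 < n) :
    ∀ p ∈ Pb j, p.1 < n ∧ p.2 < n ∧ p.1 ≠ p.2 := by
  intro p hp
  rw [Pb] at hp
  simp only [List.mem_append, List.mem_map, List.mem_range] at hp
  rcases hp with ⟨i, hi, rfl⟩ | ⟨i, hi, rfl⟩ <;> refine ⟨by omega, by omega, by omega⟩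

lemma valid_Tb {n j : ℕ} (hj : 2*j+3 < n) :
    ∀ p ∈ Tb j, p.1 < n ∧ p.2 < n ∧ p.1 ≠ p.2 := by
  intro p hp
  rw [Tb] at hp
  simp only [List.mem_append, List.mem_map, List.mem_range] at hp
  rcases hp with ⟨i, hi, rfl⟩ | ⟨i, hi, rfl⟩ <;> refine ⟨by omega, by omega, by omega⟩

lemma valid_Sb {n : ℕ} (hn : 3 ≤ n) :
    ∀ p ∈ Sb n, p.1 < n ∧ p.2 < n ∧ p.1 ≠ p.2 := by
  intro p hp
  rw [Sb] at hp
  simp only [List.mem_append, List.mem_map, List.mem_range] at hp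
  rcases hp with ⟨i, hi, rfl⟩ | ⟨i, hi, rfl⟩ <;> refine ⟨by omega, by omega, by omega⟩

lemma valid_cycAux {n j : ℕ} (hj : 2*j+1 < n) :
    ∀ p ∈ cycAux j, p.1 < n ∧ p.2 < n ∧ p.1 ≠ p.2 := by
  induction j with
  | zero => intro p hp; simp [cycAux] at hp
  | succ j ih =>
    intro p hp
    rw [cycAux, List.mem_append, List.mem_append] at hp
    rcases hp with hp | hp | hp
    · exact ih (by omega) p hp
    · exact valid_Pb (by omega) p hp
    · exact valid_Tb (by omega) p hp

lemma valid_cyc {k : ℕ} :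
    ∀ p ∈ cyc (2*k+3), p.1 < 2*k+3 ∧ p.2 < 2*k+3 ∧ p.1 ≠ p.2 := by
  have hJ : (2*k+3-3)/2 = k := by omega
  rw [cyc, hJ]
  intro p hp
  rw [List.mem_append, List.mem_append] at hp
  rcases hp with hp | hp | hp
  · exact valid_cycAux (by omega) p hp
  · exact valid_Pb (by omega) p hp
  · exact valid_Sb (by omega) p hp


end GrayAux

open GrayAux in
/-- for odd `n ≥ 3` there exists a cyclic adjacent-transposition Gray code
for the `n(n-1)` permutations of the multiset `{1,2,3,3,…,3}` with `n-2` threes. -/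
theorem exists_cyclic_multiset_gray_code (n : ℕ) (hn : 3 ≤ n) (hodd : Odd n) :
    ∃ G : Fin (n * (n - 1)) → {w : Fin n → ℕ // IsMultisetWord n w},
      Function.Bijective G ∧
      ∀ i : Fin (n * (n - 1)),
        AdjSwap n (G i).val
          (G ⟨(i.val + 1) % (n * (n - 1)),
            Nat.mod_lt _ (by have : 1 ≤ n - 1 := by omega
                             exact Nat.mul_pos (by omega) this)⟩).val := by
  classical
  obtain ⟨k, rfl⟩ : ∃ k, n = 2*k+3 := by
    obtain ⟨m, hm⟩ := hodd; exact ⟨m - 1, by omega⟩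
  set N := (2*k+3) * (2*k+3 - 1) with hN
  have hlen : (cyc (2*k+3)).length = N := length_cyc
  set L := cyc (2*k+3) with hL
  have hvalid := valid_cyc (k := k)
  have hget : ∀ i : Fin N, (L.get (Fin.cast hlen.symm i)).1 < 2*k+3 ∧
      (L.get (Fin.cast hlen.symm i)).2 < 2*k+3 ∧
      (L.get (Fin.cast hlen.symm i)).1 ≠ (L.get (Fin.cast hlen.symm i)).2 :=
    fun i => hvalid _ (L.get_mem _)
  refine ⟨fun i => ⟨wrd (2*k+3) (L.get (Fin.cast hlen.symm i)).1 (L.get (Fin.cast hlen.symm i)).2,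
      wrd_isWord (hget i).1 (hget i).2.1 (hget i).2.2⟩, ?_, ?_⟩
  · -- Bijective
    -- a bijection between off-diagonal pairs and multiset words
    have hF2 : ∃ F2 : {p : Fin (2*k+3) × Fin (2*k+3) // p.1 ≠ p.2} →
        {w : Fin (2*k+3) → ℕ // IsMultisetWord (2*k+3) w}, Function.Bijective F2 := by
      refine ⟨fun p => ⟨wrd (2*k+3) p.1.1.val p.1.2.val,
        wrd_isWord p.1.1.isLt p.1.2.isLt (fun h => p.2 (Fin.ext h))⟩, ?_, ?_⟩
      · rintro ⟨⟨a, b⟩, hab⟩ ⟨⟨c, d⟩, hcd⟩ h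
        simp only [Subtype.mk.injEq] at h
        obtain ⟨h1, h2⟩ := wrd_inj a.isLt b.isLt (fun h => hab (Fin.ext h))
          c.isLt d.isLt (fun h => hcd (Fin.ext h)) h
        apply Subtype.ext
        simp only [Prod.mk.injEq]
        exact ⟨Fin.ext h1, Fin.ext h2⟩
      · rintro ⟨w, hw⟩
        obtain ⟨x, y, hx, hy, hxy, hweq⟩ := eq_wrd hw
        refine ⟨⟨(⟨x, hx⟩, ⟨y, hy⟩), fun h => hxy (congrArg Fin.val h)⟩, ?_⟩
        exact Subtype.ext hweq.symm
    obtain ⟨F2, hF2⟩ := hF2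
    haveI : Fintype {w : Fin (2*k+3) → ℕ // IsMultisetWord (2*k+3) w} :=
      Fintype.ofBijective F2 hF2
    have c1 : Fintype.card {p : Fin (2*k+3) × Fin (2*k+3) // p.1 = p.2} = 2*k+3 := by
      refine (Fintype.card_congr ⟨fun p => p.1.1, fun x => ⟨(x, x), rfl⟩, ?_, ?_⟩).trans
        (Fintype.card_fin _)
      · rintro ⟨⟨a, b⟩, h⟩
        simp only at h
        subst h
        rfl
      · intro x; rfl
    have c2 : Fintype.card {p : Fin (2*k+3) × Fin (2*k+3) // p.1 ≠ p.2} = N := by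
      have hc := Fintype.card_subtype_compl (fun p : Fin (2*k+3) × Fin (2*k+3) => p.1 = p.2)
      rw [c1, Fintype.card_prod, Fintype.card_fin] at hc
      have harith : (2*k+3) * (2*k+3) - (2*k+3) = N := by
        have h9 : (2*k+3) * (2*k+3) = N + (2*k+3) := by
          rw [hN]
          have e : 2*k+3-1 = 2*k+2 := by omega
          rw [e]; ring
        omega
      exact hc.trans harith
    have c3 : Fintype.card {w : Fin (2*k+3) → ℕ // IsMultisetWord (2*k+3) w} = N := by
      rw [← Fintype.card_of_bijective hF2, c2]
    rw [Fintype.bijective_iff_surjective_and_card]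
    constructor
    · -- Surjective
      rintro ⟨w, hw⟩
      obtain ⟨x, y, hx, hy, hxy, hweq⟩ := eq_wrd hw
      obtain ⟨idx, hidx⟩ := List.mem_iff_get.mp (mem_cyc hx hy hxy)
      have hlt : idx.val < N := by rw [← hlen]; exact idx.isLt
      refine ⟨⟨idx.val, hlt⟩, Subtype.ext ?_⟩
      show wrd (2*k+3) (L.get (Fin.cast hlen.symm ⟨idx.val, hlt⟩)).1
        (L.get (Fin.cast hlen.symm ⟨idx.val, hlt⟩)).2 = w
      have e : Fin.cast hlen.symm ⟨idx.val, hlt⟩ = idx := Fin.ext rfl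
      rw [e, hidx, hweq]
    · rw [Fintype.card_fin, c3]
  · -- Adjacency
    have hchain := chain_cyc (k := k)
    rw [← hL, List.Chain', List.isChain_iff_getElem] at hchain
    have hNpos : 0 < N := by
      rw [hN]; exact Nat.mul_pos (by omega) (by omega)
    have key : ∀ (a b : Fin L.length),
        (b.val = a.val + 1 ∨ (a.val + 1 = L.length ∧ b.val = 0)) →
        Step (2*k+3) (L.get a) (L.get b) := by
      rintro ⟨a, ha⟩ ⟨b, hb⟩ (h | ⟨h1, h2⟩)
      · simp only at h
        subst h
        exact hchain a (by omega)
      · simp only at h1 h2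
        subst h2
        have hne : L ≠ [] := List.length_pos_iff.mp (by omega)
        have hlast : L.get ⟨a, ha⟩ = (1, 0) := by
          have h3 : L.getLast? = some (1, 0) := by rw [hL]; exact getLast?_cyc
          rw [List.getLast?_eq_getLast hne, List.getLast_eq_getElem] at h3
          have h4 := Option.some.inj h3
          have h5 : a = L.length - 1 := by omega
          subst h5
          exact h4
        have hhead : L.get ⟨0, hb⟩ = (0, 1) := by
          have h3 : L.head? = some (0, 1) := by rw [hL]; exact head?_cyc
          rw [List.head?_eq_head hne] at h3
          rw [List.get_mk_zero]
          exact Option.some.inj h3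
        rw [hlast, hhead]
        exact Step.symm (step_swap (by omega))
    intro i
    rcases Nat.lt_or_ge (i.val + 1) N with hlt | hge
    · exact key _ _ (Or.inl (Nat.mod_eq_of_lt hlt))
    · have h1 : i.val + 1 = N := by have := i.isLt; omega
      refine key _ _ (Or.inr ⟨?_, ?_⟩)
      · show i.val + 1 = L.length
        omega
      · show (i.val + 1) % N = 0
        rw [h1]
        exact Nat.mod_self N
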